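/- arXiv:2401.12550 — 2 statements merged into one kernel-verified Lean document; each statement's English description precedes it below -/
import Mathlib

section
/- Vertex description of the top part P_d^+: for every finite set V ⊆ (Fin n → ℝ) and every index d : Fin n, (convexHull ℝ V) ∩ {x | 0 ≤ x d} = convexHull ℝ ({v ∈ V | 0 ≤ v d} ∪ I_d(V)). -/
/-!
A point `x` of `conv V` with `x d ≥ 0` lies on a segment from a point `p` of the hull of the
vertices with `v d ≥ 0` to a point `q` of the hull of those with `v d < 0`, and then already on the
segment from `p` to the point where `[p, q]` meets the hyperplane `x d = 0`. That crossing point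
depends on `p` (and on `q`) like a central projection, which maps segments onto segments; hence
the crossing points of hull points lie in the hull of the crossing points of vertices.
-/

/-- The intersection-point set `I_d(V)`. -/
def interPts {n : ℕ} (d : Fin n) (V : Set (Fin n → ℝ)) : Set (Fin n → ℝ) :=
  {x | ∃ v ∈ V, ∃ w ∈ V, v d > 0 ∧ w d < 0 ∧
    x = ((-(w d)) / (v d - w d)) • v + ((v d) / (v d - w d)) • w}

open Set

section Crossing

variable {E : Type*} [AddCommGroup E] [Module ℝ E] (f : E →ₗ[ℝ] ℝ)

/-- The point where the line through `p` and `q` meets `ker f`, provided `f p ≠ f q`. -/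
noncomputable def crossPoint (p q : E) : E :=
  (-(f q) / (f p - f q)) • p + (f p / (f p - f q)) • q

def crossPoints (s : Set E) : Set E :=
  {x | ∃ p ∈ s, ∃ q ∈ s, 0 < f p ∧ f q < 0 ∧ x = crossPoint f p q}

variable {f}

lemma map_crossPoint {p q : E} (h : f p ≠ f q) : f (crossPoint f p q) = 0 := by
  have : f p - f q ≠ 0 := sub_ne_zero.mpr h
  simp only [crossPoint, map_add, map_smul, smul_eq_mul]
  field_simp
  ring

lemma crossPoint_of_map_eq_zero {p q : E} (hp : f p = 0) (hq : f q ≠ 0) :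
    crossPoint f p q = p := by
  simp [crossPoint, hp, hq]

lemma crossPoint_mem_segment {p q : E} (hp : 0 ≤ f p) (hq : f q ≤ 0) (hpq : f q < f p) :
    crossPoint f p q ∈ segment ℝ p q := by
  have h : 0 < f p - f q := sub_pos.mpr hpq
  exact ⟨_, _, div_nonneg (neg_nonneg.mpr hq) h.le, div_nonneg hp h.le,
    by field_simp; ring, rfl⟩

lemma crossPoint_neg_swap (p q : E) : crossPoint (-f) q p = crossPoint f p q := by
  simp only [crossPoint, LinearMap.neg_apply, neg_neg, add_comm]
  congr 2 <;> ring

lemma crossPoint_combo_mem_segment {p₁ p₂ q : E} (h₁ : f q < f p₁) (h₂ : f q < f p₂)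
    {a b : ℝ} (ha : 0 ≤ a) (hb : 0 ≤ b) (hab : a + b = 1) :
    crossPoint f (a • p₁ + b • p₂) q ∈ segment ℝ (crossPoint f p₁ q) (crossPoint f p₂ q) := by
  -- `f p - f q` is affine in `p`, so the weights are proportional to `a (f p₁ - f q)`, `b (f p₂ - f q)`.
  have hD : f q < f (a • p₁ + b • p₂) := convex_halfSpace_gt f.isLinear _ h₁ h₂ ha hb hab
  simp only [map_add, map_smul, smul_eq_mul] at hD
  obtain rfl : b = 1 - a := by linarith
  have h₁' : f p₁ - f q ≠ 0 := (sub_pos.mpr h₁).ne'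
  have h₂' : f p₂ - f q ≠ 0 := (sub_pos.mpr h₂).ne'
  have hD' : a * f p₁ + (1 - a) * f p₂ - f q ≠ 0 := (sub_pos.mpr hD).ne'
  refine ⟨a * (f p₁ - f q) / (a * f p₁ + (1 - a) * f p₂ - f q),
    (1 - a) * (f p₂ - f q) / (a * f p₁ + (1 - a) * f p₂ - f q),
    div_nonneg (mul_nonneg ha (sub_pos.mpr h₁).le) (sub_pos.mpr hD).le,
    div_nonneg (mul_nonneg hb (sub_pos.mpr h₂).le) (sub_pos.mpr hD).le,
    by field_simp; ring, ?_⟩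
  simp only [crossPoint, map_add, map_smul, smul_eq_mul]
  match_scalars <;> field_simp

lemma convex_setOf_crossPoint_mem {K : Set E} (hK : Convex ℝ K) (q : E) :
    Convex ℝ {p | f q < f p ∧ crossPoint f p q ∈ K} := by
  rintro p₁ ⟨h₁, hK₁⟩ p₂ ⟨h₂, hK₂⟩ a b ha hb hab
  exact ⟨convex_halfSpace_gt f.isLinear _ h₁ h₂ ha hb hab,
    hK.segment_subset hK₁ hK₂ (crossPoint_combo_mem_segment h₁ h₂ ha hb hab)⟩

lemma crossPoint_mem_of_mem_convexHull {A B K : Set E} (hK : Convex ℝ K)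
    (hAB : ∀ p ∈ A, ∀ q ∈ B, f q < f p ∧ crossPoint f p q ∈ K) {p q : E}
    (hp : p ∈ convexHull ℝ A) (hq : q ∈ convexHull ℝ B) : crossPoint f p q ∈ K := by
  have hA : ∀ q ∈ B, convexHull ℝ A ⊆ {p | f q < f p ∧ crossPoint f p q ∈ K} := fun q hq =>
    convexHull_min (fun p hp => hAB p hp q hq) (convex_setOf_crossPoint_mem hK q)
  have hB : convexHull ℝ B ⊆ {q | f q < f p ∧ crossPoint f p q ∈ K} := by
    refine convexHull_min (fun q hq => hA q hq hp) ?_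
    simpa [crossPoint_neg_swap] using convex_setOf_crossPoint_mem (f := -f) hK p
  exact (hB hq).2

lemma mem_segment_crossPoint {p q x : E} (hx : x ∈ segment ℝ p q) (hp : 0 ≤ f p)
    (hq : f q < 0) (hfx : 0 ≤ f x) : x ∈ segment ℝ p (crossPoint f p q) := by
  obtain ⟨a, b, ha, hb, hab, rfl⟩ := hx
  obtain rfl : a = 1 - b := by linarith
  simp only [map_add, map_smul, smul_eq_mul] at hfx
  rcases hp.eq_or_lt with hp | hp
  · obtain rfl : b = 0 := by nlinarith
    simp [left_mem_segment]
  have h : f p - f q ≠ 0 := by linarith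
  refine ⟨1 - b * (f p - f q) / f p, b * (f p - f q) / f p, ?_, div_nonneg (mul_nonneg hb (by linarith)) hp.le, by ring, ?_⟩
  · rw [sub_nonneg, div_le_one hp]
    linarith
  simp only [crossPoint]
  match_scalars <;> field_simp
  ring

theorem convexHull_inter_halfSpace (s : Set E) :
    convexHull ℝ s ∩ {x | 0 ≤ f x} = convexHull ℝ ({v ∈ s | 0 ≤ f v} ∪ crossPoints f s) := by
  apply Subset.antisymm
  · rintro x ⟨hx, hfx⟩
    set A := {v ∈ s | 0 ≤ f v}
    set B := {v ∈ s | f v < 0}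
    set K := convexHull ℝ (A ∪ crossPoints f s)
    have hK : Convex ℝ K := convex_convexHull ℝ _
    have hAK : convexHull ℝ A ⊆ K := convexHull_mono subset_union_left
    have hA : convexHull ℝ A ⊆ {x | 0 ≤ f x} :=
      convexHull_min (fun v hv => hv.2) (convex_halfSpace_ge f.isLinear 0)
    have hB : convexHull ℝ B ⊆ {x | f x < 0} :=
      convexHull_min (fun v hv => hv.2) (convex_halfSpace_lt f.isLinear 0)
    have hAB : ∀ p ∈ A, ∀ q ∈ B, f q < f p ∧ crossPoint f p q ∈ K := by
      rintro p ⟨hps, hp⟩ q ⟨hqs, hq⟩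
      refine ⟨hq.trans_le hp, subset_convexHull ℝ _ ?_⟩
      rcases hp.eq_or_lt with hp | hp
      · rw [crossPoint_of_map_eq_zero hp.symm hq.ne]
        exact Or.inl ⟨hps, hp.le⟩
      · exact Or.inr ⟨p, hps, q, hqs, hp, hq, rfl⟩
    have hs : s = A ∪ B := by
      ext v
      simp [A, B, ← and_or_left, le_or_gt]
    rw [hs] at hx
    rcases B.eq_empty_or_nonempty with hB₀ | hB₀
    · rw [hB₀, union_empty] at hx
      exact hAK hx
    rcases A.eq_empty_or_nonempty with hA₀ | hA₀
    · rw [hA₀, empty_union] at hx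
      exact absurd (show 0 ≤ f x from hfx) (not_le.mpr (hB hx))
    rw [convexHull_union hA₀ hB₀, mem_convexJoin] at hx
    obtain ⟨p, hp, q, hq, hxpq⟩ := hx
    exact hK.segment_subset (hAK hp) (crossPoint_mem_of_mem_convexHull hK hAB hp hq)
      (mem_segment_crossPoint hxpq (hA hp) (hB hq) hfx)
  · refine convexHull_min ?_ ((convex_convexHull ℝ s).inter (convex_halfSpace_ge f.isLinear 0))
    rintro _ (⟨hv, hfv⟩ | ⟨p, hp, q, hq, hfp, hfq, rfl⟩)
    · exact ⟨subset_convexHull ℝ s hv, hfv⟩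
    · exact ⟨segment_subset_convexHull hp hq (crossPoint_mem_segment hfp.le hfq.le (hfq.trans hfp)),
        (map_crossPoint (hfq.trans hfp).ne').ge⟩

end Crossing

theorem polytope_top_part_vertices_general {n : ℕ} (V : Set (Fin n → ℝ))
    (d : Fin n) :
    (convexHull ℝ V) ∩ {x | 0 ≤ x d} =
      convexHull ℝ ({v ∈ V | 0 ≤ v d} ∪ interPts d V) :=
  convexHull_inter_halfSpace (f := LinearMap.proj d) V

/-- Vertex description of the top part `P_d^+`. -/
theorem polytope_top_part_vertices {n : ℕ} (V : Set (Fin n → ℝ))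
    (hV : V.Finite) (d : Fin n) :
    (convexHull ℝ V) ∩ {x | 0 ≤ x d} =
      convexHull ℝ ({v ∈ V | 0 ≤ v d} ∪ interPts d V) :=
  polytope_top_part_vertices_general V d
end

section
/- Correctness of the complete-top-polytope (CTP) pruning strategy: let V ⊆ (Fin n → ℝ) be finite and d : Fin n, and suppose that for every v ∈ V with v d < 0 the projection Proj_d v belongs to convexHull ℝ V. Then Proj_d '' ((convexHull ℝ V) ∩ {x | x d ≤ 0}) ⊆ (convexHull ℝ V) ∩ {x | 0 ≤ x d}, and consequently the image of convexHull ℝ V under r_d equals (convexHull ℝ V) ∩ {x | 0 ≤ x d}. -/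
/-- The coordinate ReLU map acting only on dimension `d`. -/
noncomputable def reluD {n : ℕ} (d : Fin n) (x : Fin n → ℝ) : Fin n → ℝ :=
  Function.update x d (max (x d) 0)

/-- The coordinate projection onto the hyperplane `{x | x d = 0}`. -/
def projD {n : ℕ} (d : Fin n) (x : Fin n → ℝ) : Fin n → ℝ :=
  Function.update x d 0

/-!
Every `v ∈ V` can be lifted along the `d`-th axis into `convexHull ℝ V ∩ {0 ≤ x d}`: by `v`
itself if `v d ≥ 0`, by `projD d v` otherwise. Taking the same convex combination of the lifts
shows that every `x ∈ convexHull ℝ V` has such a lift `update x d t`. If `x d ≤ 0`, then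
`projD d x` lies on the segment from `x` to its lift, hence in the hull. The ReLU image is then
the hull's nonnegative part, since `reluD d` fixes that part and agrees with `projD d` elsewhere.
-/

open Function

section Update

variable {ι : Type*} [DecidableEq ι]

lemma update_mem_segment_of_mem_segment (x : ι → ℝ) (i : ι) {a t : ℝ}
    (ha : a ∈ segment ℝ (x i) t) : update x i a ∈ segment ℝ x (update x i t) := by
  have himage := Pi.image_update_segment (𝕜 := ℝ) i (x i) t x
  rw [update_eq_self] at himage
  exact himage ▸ Set.mem_image_of_mem _ ha

lemma convex_setOf_exists_nonneg_update_mem {C : Set (ι → ℝ)} (hC : Convex ℝ C) (i : ι) :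
    Convex ℝ {x | ∃ t, 0 ≤ t ∧ update x i t ∈ C} := by
  rintro x ⟨s, hs, hxs⟩ y ⟨t, ht, hyt⟩ a b ha hb hab
  refine ⟨a * s + b * t, by positivity, ?_⟩
  have hcombo := hC hxs hyt ha hb hab
  rwa [← update_smul, ← update_smul, ← update_add] at hcombo

end Update

variable {n : ℕ} {V : Set (Fin n → ℝ)} {d : Fin n}

lemma reluD_of_nonneg {x : Fin n → ℝ} (hx : 0 ≤ x d) : reluD d x = x := by
  simp [reluD, max_eq_left hx]

lemma reluD_eq_projD_of_nonpos {x : Fin n → ℝ} (hx : x d ≤ 0) : reluD d x = projD d x := by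
  simp [reluD, projD, max_eq_right hx]

lemma projD_apply_self (x : Fin n → ℝ) : projD d x d = 0 := by
  simp [projD]

lemma reluD_mem_convexHull (hproj : ∀ v ∈ V, v d < 0 → projD d v ∈ convexHull ℝ V)
    {v : Fin n → ℝ} (hv : v ∈ V) : reluD d v ∈ convexHull ℝ V := by
  rcases lt_or_ge (v d) 0 with hneg | hnonneg
  · rw [reluD_eq_projD_of_nonpos hneg.le]
    exact hproj v hv hneg
  · rw [reluD_of_nonneg hnonneg]
    exact subset_convexHull ℝ V hv

lemma exists_nonneg_update_mem_convexHull
    (hproj : ∀ v ∈ V, v d < 0 → projD d v ∈ convexHull ℝ V)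
    {x : Fin n → ℝ} (hx : x ∈ convexHull ℝ V) :
    ∃ t, 0 ≤ t ∧ update x d t ∈ convexHull ℝ V := by
  refine convexHull_min (fun v hv => ?_)
    (convex_setOf_exists_nonneg_update_mem (convex_convexHull ℝ V) d) hx
  exact ⟨max (v d) 0, le_max_right _ _, reluD_mem_convexHull hproj hv⟩

lemma projD_mem_convexHull (hproj : ∀ v ∈ V, v d < 0 → projD d v ∈ convexHull ℝ V)
    {x : Fin n → ℝ} (hx : x ∈ convexHull ℝ V) (hxd : x d ≤ 0) :
    projD d x ∈ convexHull ℝ V := by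
  obtain ⟨t, ht, hlift⟩ := exists_nonneg_update_mem_convexHull hproj hx
  have hzero : (0 : ℝ) ∈ segment ℝ (x d) t := by
    rw [segment_eq_Icc (hxd.trans ht)]
    exact ⟨hxd, ht⟩
  exact (convex_convexHull ℝ V).segment_subset hx hlift
    (update_mem_segment_of_mem_segment x d hzero)

theorem ctp_pruning_correct_general {n : ℕ} (V : Set (Fin n → ℝ))
    (d : Fin n)
    (hproj : ∀ v ∈ V, v d < 0 → projD d v ∈ convexHull ℝ V) :
    projD d '' ((convexHull ℝ V) ∩ {x | x d ≤ 0}) ⊆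
      (convexHull ℝ V) ∩ {x | 0 ≤ x d} ∧
    reluD d '' (convexHull ℝ V) = (convexHull ℝ V) ∩ {x | 0 ≤ x d} := by
  have hproj_image : ∀ x ∈ convexHull ℝ V, x d ≤ 0 →
      projD d x ∈ convexHull ℝ V ∩ {x | 0 ≤ x d} := fun x hx hxd =>
    ⟨projD_mem_convexHull hproj hx hxd, (projD_apply_self x).ge⟩
  refine ⟨?_, Set.Subset.antisymm ?_ ?_⟩
  · rintro _ ⟨x, ⟨hx, hxd⟩, rfl⟩
    exact hproj_image x hx hxd
  · rintro _ ⟨x, hx, rfl⟩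
    rcases le_total 0 (x d) with hnonneg | hnonpos
    · rw [reluD_of_nonneg hnonneg]
      exact ⟨hx, hnonneg⟩
    · rw [reluD_eq_projD_of_nonpos hnonpos]
      exact hproj_image x hx hnonpos
  · rintro y ⟨hy, hyd⟩
    exact ⟨y, hy, reluD_of_nonneg hyd⟩

/-- Correctness of the complete-top-polytope (CTP) pruning strategy. -/
theorem ctp_pruning_correct {n : ℕ} (V : Set (Fin n → ℝ))
    (hV : V.Finite) (d : Fin n)
    (hproj : ∀ v ∈ V, v d < 0 → projD d v ∈ convexHull ℝ V) :
    projD d '' ((convexHull ℝ V) ∩ {x | x d ≤ 0}) ⊆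
      (convexHull ℝ V) ∩ {x | 0 ≤ x d} ∧
    reluD d '' (convexHull ℝ V) = (convexHull ℝ V) ∩ {x | 0 ≤ x d} :=
  ctp_pruning_correct_general V d hproj
end
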